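/- Let S be a simple Cu-semigroup. If S satisfies the β-comparison property, then S satisfies ω-comparison. -/

import Mathlib

open scoped ENNReal

/-- Compact containment (way-below) relation: `a ≪ b` iff for every monotone sequence
with a supremum dominating `b`, some term dominates `a`. -/
def CuWayBelow {S : Type*} [Preorder S] (a b : S) : Prop :=
  ∀ c : ℕ → S, Monotone c → ∀ s : S, IsLUB (Set.range c) s → b ≤ s → ∃ n, a ≤ c n

/-- The axioms (O1)-(O4) of the category Cu, together with positivity of the order. -/
structure CuSemigroup (S : Type*) [AddCommMonoid S] [PartialOrder S] [IsOrderedAddMonoid S] : Prop where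
  pos : ∀ x : S, 0 ≤ x
  O1 : ∀ c : ℕ → S, Monotone c → ∃ s : S, IsLUB (Set.range c) s
  O2 : ∀ a : S, ∃ c : ℕ → S, (∀ n, CuWayBelow (c n) (c (n + 1))) ∧ IsLUB (Set.range c) a
  O3 : ∀ a' a b' b : S, CuWayBelow a' a → CuWayBelow b' b → CuWayBelow (a' + b') (a + b)
  O4 : ∀ c d : ℕ → S, Monotone c → Monotone d → ∀ s t : S,
      IsLUB (Set.range c) s → IsLUB (Set.range d) t →
      IsLUB (Set.range fun n => c n + d n) (s + t)

/-- Simplicity: every nonzero element is full. -/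
def CuSimple (S : Type*) [AddCommMonoid S] [PartialOrder S] [IsOrderedAddMonoid S] : Prop :=
  ∀ x y : S, x ≠ 0 → y ≠ 0 → ∀ y' : S, CuWayBelow y' y → ∃ n : ℕ, y' ≤ n • x

/-- A full sequence: increasing and absorbing every compactly contained element. -/
def CuFullSeq {S : Type*} [AddCommMonoid S] [PartialOrder S] [IsOrderedAddMonoid S] (x : ℕ → S) : Prop :=
  Monotone x ∧ ∀ z' z : S, CuWayBelow z' z → ∃ n m : ℕ, z' ≤ m • x n

/-- The value `β(x,y) = inf { l/k : k ≥ 1, k•x ≤ l•y }`. -/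
noncomputable def beta {W : Type*} [AddCommMonoid W] [PartialOrder W] [IsOrderedAddMonoid W] (x y : W) : ℝ :=
  sInf {r : ℝ | ∃ k l : ℕ, 0 < k ∧ k • x ≤ l • y ∧ r = (l : ℝ) / (k : ℝ)}

/-- ω-comparison. -/
def OmegaComparison (S : Type*) [AddCommMonoid S] [PartialOrder S] [IsOrderedAddMonoid S] : Prop :=
  ∀ (x' x : S) (y : ℕ → S), CuWayBelow x' x →
    (∀ j : ℕ, ∃ k : ℕ, 1 ≤ k ∧ (k + 1) • x ≤ k • y j) →
    ∃ n : ℕ, x' ≤ ∑ j ∈ Finset.range n, y j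

/-- β-comparison. -/
def BetaComparison (S : Type*) [AddCommMonoid S] [PartialOrder S] [IsOrderedAddMonoid S] : Prop :=
  ∀ x y : S, (∃ n : ℕ, x ≤ n • y) → beta x y = 0 → x ≤ y

/-!
Interpolate `x' ≪ x'' ≪ x`. Adding up the relations `x'' <ₛ y j` for `j < n` gives
`n (K + 1) • x'' ≤ K • (y 0 + ⋯ + y (n - 1))`, so `β(x'', s) ≤ 1 / n` for every `n`, where `s`
is the supremum of the partial sums. Simplicity puts `x''` below a multiple of `y 0 ≤ s`, so
β-comparison yields `x'' ≤ s`, and `x' ≪ x''` then lies below some partial sum.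
-/

section WayBelow

variable {S : Type*} [Preorder S] {a a' b b' : S}

theorem CuWayBelow.le (h : CuWayBelow a b) : a ≤ b := by
  obtain ⟨_, hn⟩ := h (fun _ => b) monotone_const b (by simp [isLUB_singleton]) le_rfl
  exact hn

theorem CuWayBelow.mono (ha : a' ≤ a) (h : CuWayBelow a b) (hb : b ≤ b') : CuWayBelow a' b' :=
  fun c hc s hs hbs => (h c hc s hs (hb.trans hbs)).imp fun _ => ha.trans

end WayBelow

theorem CuSemigroup.exists_wayBelow_wayBelow {S : Type*} [AddCommMonoid S] [PartialOrder S]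
    [IsOrderedAddMonoid S] (hCu : CuSemigroup S) {x' x : S} (h : CuWayBelow x' x) :
    ∃ x'', CuWayBelow x' x'' ∧ CuWayBelow x'' x := by
  obtain ⟨c, hc, hcx⟩ := hCu.O2 x
  obtain ⟨n, hn⟩ := h c (monotone_nat_of_le_succ fun n => (hc n).le) x hcx le_rfl
  exact ⟨c (n + 1), (hc n).mono hn le_rfl, (hc (n + 1)).mono le_rfl (hcx.1 ⟨n + 2, rfl⟩)⟩

section Beta

variable {W : Type*} [AddCommMonoid W] [PartialOrder W] [IsOrderedAddMonoid W] {x y : W}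

theorem beta_eq_zero_of_forall_pos
    (h : ∀ ε : ℝ, 0 < ε → ∃ k l : ℕ, 0 < k ∧ k • x ≤ l • y ∧ (l : ℝ) / k ≤ ε) :
    beta x y = 0 := by
  have hnonneg : ∀ r ∈ {r : ℝ | ∃ k l : ℕ, 0 < k ∧ k • x ≤ l • y ∧ r = (l : ℝ) / k}, 0 ≤ r := by
    rintro r ⟨k, l, -, -, rfl⟩
    positivity
  obtain ⟨k, l, hk, hkl, -⟩ := h 1 one_pos
  refine le_antisymm (le_of_forall_pos_le_add fun ε hε => ?_)
    (le_csInf ⟨_, k, l, hk, hkl, rfl⟩ hnonneg)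
  obtain ⟨k, l, hk, hkl, hε⟩ := h ε hε
  rw [zero_add]
  exact (csInf_le ⟨0, hnonneg⟩ ⟨k, l, hk, hkl, rfl⟩).trans hε

theorem exists_nsmul_le_nsmul_sum_range (hx : 0 ≤ x) {y : ℕ → W}
    (hy : ∀ j, ∃ k : ℕ, 1 ≤ k ∧ (k + 1) • x ≤ k • y j) (n : ℕ) :
    ∃ K : ℕ, 0 < K ∧ (n * (K + 1)) • x ≤ K • ∑ j ∈ Finset.range n, y j := by
  induction n with
  | zero => exact ⟨1, one_pos, by simp⟩
  | succ n ih =>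
    obtain ⟨K, hK, hsum⟩ := ih
    obtain ⟨k, hk, hyn⟩ := hy n
    refine ⟨K * k, Nat.mul_pos hK hk, ?_⟩
    calc ((n + 1) * (K * k + 1)) • x
        ≤ (k * (n * (K + 1)) + K * (k + 1)) • x := nsmul_le_nsmul_left hx (by nlinarith)
      _ = k • (n * (K + 1)) • x + K • (k + 1) • x := by
          rw [add_nsmul, mul_nsmul' x k, mul_nsmul' x K]
      _ ≤ k • K • ∑ j ∈ Finset.range n, y j + K • k • y n :=
          add_le_add (nsmul_le_nsmul_right hsum k) (nsmul_le_nsmul_right hyn K)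
      _ = (K * k) • ∑ j ∈ Finset.range (n + 1), y j := by
          rw [Finset.sum_range_succ, nsmul_add, ← mul_nsmul', ← mul_nsmul', mul_comm k K]

theorem beta_eq_zero_of_forall_sum_range_le (hx : 0 ≤ x) {y : ℕ → W}
    (hy : ∀ j, ∃ k : ℕ, 1 ≤ k ∧ (k + 1) • x ≤ k • y j) {s : W}
    (hs : ∀ n, ∑ j ∈ Finset.range n, y j ≤ s) : beta x s = 0 := by
  refine beta_eq_zero_of_forall_pos fun ε hε => ?_
  obtain ⟨n, hn⟩ := exists_nat_one_div_lt hε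
  obtain ⟨K, hK, hsum⟩ := exists_nsmul_le_nsmul_sum_range hx hy (n + 1)
  refine ⟨(n + 1) * (K + 1), K, by positivity,
    hsum.trans (nsmul_le_nsmul_right (hs _) K), le_trans ?_ hn.le⟩
  rw [div_le_div_iff₀ (by positivity) (by positivity)]
  push_cast
  nlinarith

end Beta

/-- In a simple Cu-semigroup, β-comparison implies ω-comparison. -/
theorem stmt12 {S : Type*} [AddCommMonoid S] [PartialOrder S] [IsOrderedAddMonoid S] (hCu : CuSemigroup S)
    (hsimple : CuSimple S) (hβ : BetaComparison S) :
    OmegaComparison S := by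
  intro x' x y hx'x hy
  by_cases hx : x = 0
  · exact ⟨0, by simpa [hx] using hx'x.le⟩
  obtain ⟨x'', hx'x'', hx''x⟩ := hCu.exists_wayBelow_wayBelow hx'x
  have hy'' : ∀ j, ∃ k : ℕ, 1 ≤ k ∧ (k + 1) • x'' ≤ k • y j := fun j =>
    (hy j).imp fun k ⟨hk, hkx⟩ => ⟨hk, (nsmul_le_nsmul_right hx''x.le _).trans hkx⟩
  have hy0 : y 0 ≠ 0 := by
    obtain ⟨k, -, hk⟩ := hy 0
    rintro h0
    refine hx (le_antisymm ?_ (hCu.pos x))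
    simpa [h0] using (nsmul_le_nsmul_left (hCu.pos x) (Nat.le_add_left 1 k)).trans hk
  have hmono : Monotone fun n => ∑ j ∈ Finset.range n, y j := fun m n hmn =>
    Finset.sum_le_sum_of_subset_of_nonneg (Finset.range_mono hmn) fun j _ _ => hCu.pos (y j)
  obtain ⟨s, hs⟩ := hCu.O1 _ hmono
  obtain ⟨m, hm⟩ := hsimple (y 0) x hy0 hx x'' hx''x
  have hy0s : y 0 ≤ s := by simpa using hs.1 ⟨1, rfl⟩
  have hx''s : x'' ≤ s := hβ x'' s ⟨m, hm.trans (nsmul_le_nsmul_right hy0s m)⟩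
    (beta_eq_zero_of_forall_sum_range_le (hCu.pos x'') hy'' fun n => hs.1 ⟨n, rfl⟩)
  exact hx'x'' _ hmono s hs hx''s
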